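/- For any k ≥ 2 and l ∈ ℕ with k + l even, the twisted cubic cylinder W̄_{k,l} contains two vertex-disjoint double rays whose vertex sets together partition the whole vertex set ℤ × ℤ_k; that is, there exist injective maps f₁, f₂ : ℤ → ℤ × ℤ_k with disjoint images whose union is all of ℤ × ℤ_k, such that fᵢ(n) is adjacent to fᵢ(n+1) in W̄_{k,l} for all n ∈ ℤ and i ∈ {1,2}. -/

import Mathlib

/-- One "direction" of the edges of the twisted cubic cylinder `W̄_{k,l}`:
horizontal edges, straight vertical edges and twisted edges. -/
def cylStep (k : ℕ) (l : ℤ) (p q : ℤ × ZMod k) : Prop :=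
  -- horizontal edges {(n,m),(n+1,m)}
  (q.1 = p.1 + 1 ∧ q.2 = p.2) ∨
  -- straight vertical edges
  (∃ (n : ℤ) (m : ℕ), m + 2 ≤ k ∧
    ((Even m ∧ p = (2 * n, (m : ZMod k)) ∧ q = (2 * n, ((m + 1 : ℕ) : ZMod k))) ∨
     (Odd m ∧ p = (2 * n + 1, (m : ZMod k)) ∧ q = (2 * n + 1, ((m + 1 : ℕ) : ZMod k))))) ∨
  -- twisted edges
  ((Even k ∧ ∃ n : ℤ, p = (2 * n + 1, ((k - 1 : ℕ) : ZMod k)) ∧ q = (2 * n + 1 + l, 0)) ∨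
   (Odd k ∧ ∃ n : ℤ, p = (2 * n, ((k - 1 : ℕ) : ZMod k)) ∧ q = (2 * n + l, 0)))

/-- The twisted cubic cylinder `W̄_{k,l}` of height `k` and twist `l`. -/
def twistedCylinder (k : ℕ) (l : ℤ) : SimpleGraph (ℤ × ZMod k) where
  Adj p q := p ≠ q ∧ (cylStep k l p q ∨ cylStep k l q p)
  symm := ⟨by rintro p q ⟨hne, h⟩; exact ⟨hne.symm, h.symm⟩⟩
  loopless := ⟨by rintro p ⟨hne, -⟩; exact hne rfl⟩

/-!
Both double rays are zigzags winding around the cylinder. A zigzag of width `u` runs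
horizontally through `u` vertices of row `0`, climbs a vertical edge to row `1`, runs through
`u` vertices there, and so on; from row `k - 1` a twisted edge takes it back to row `0`, `s`
columns further on. Taking `u` even makes every climb happen at a column of the right parity,
and the ray closes up exactly when `(u - 1) * ∑ ε m + l = s`, where `ε m = ±1` is its direction
in row `m`. In each row it then occupies one interval of `u` residues modulo `s`, so a second
zigzag of width `s - u`, started where these intervals end, covers precisely the remaining
vertices. Suitable directions and widths exist whenever `k ≥ 3` and `k + l` is even (equal
widths `u = s / 2`, or alternating directions with `s = l` when `k` is even); for `k = 2` the
two rows themselves are the rays.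
-/

lemma Int.odd_of_isUnit {a : ℤ} (ha : IsUnit a) : Odd a := by
  rcases Int.isUnit_iff.mp ha with rfl | rfl <;> decide

lemma Int.eq_and_eq_of_add_mul_eq {s i i' a b : ℤ} (hi : 0 ≤ i) (his : i < s) (hi' : 0 ≤ i')
    (his' : i' < s) (h : i + s * a = i' + s * b) : i = i' ∧ a = b := by
  obtain ⟨hq, hr⟩ := (Int.ediv_emod_unique (by omega)).2 ⟨rfl, hi, his⟩
  obtain ⟨hq', hr'⟩ := (Int.ediv_emod_unique (by omega)).2 ⟨h.symm, hi', his'⟩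
  exact ⟨hr.symm.trans hr', hq.symm.trans hq'⟩

lemma Int.emod_sub_lt_sub_iff {s u y : ℤ} (hu : 0 ≤ u) (hus : u < s) :
    (y - u) % s < s - u ↔ u ≤ y % s := by
  have hy := Int.emod_add_mul_ediv y s
  have h0 := Int.emod_nonneg y (by omega : s ≠ 0)
  have h1 := Int.emod_lt_of_pos y (by omega : 0 < s)
  rcases le_or_gt u (y % s) with h | h
  · rw [((Int.ediv_emod_unique (q := y / s) (r := y % s - u) (by omega)).2
      ⟨by linear_combination hy, by omega, by omega⟩).2]
    omega
  · rw [((Int.ediv_emod_unique (q := y / s - 1) (r := y % s - u + s) (by omega)).2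
      ⟨by linear_combination hy, by omega, by omega⟩).2]
    omega

def SimpleGraph.IsDoubleRay {V : Type*} (G : SimpleGraph V) (f : ℤ → V) : Prop :=
  Function.Injective f ∧ ∀ n, G.Adj (f n) (f (n + 1))

def SimpleGraph.HasTwoSpanningDoubleRays {V : Type*} (G : SimpleGraph V) : Prop :=
  ∃ f₁ f₂ : ℤ → V, G.IsDoubleRay f₁ ∧ G.IsDoubleRay f₂ ∧ Set.range f₂ = (Set.range f₁)ᶜ

namespace TwistedCylinder

variable {k : ℕ} {l s u c₀ : ℤ} {ε : ℕ → ℤ}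

lemma adj_horizontal {δ : ℤ} (hδ : IsUnit δ) (x : ℤ) (μ : ZMod k) :
    (twistedCylinder k l).Adj (x, μ) (x + δ, μ) := by
  rcases Int.isUnit_iff.mp hδ with rfl | rfl
  · exact ⟨by simp, Or.inl (Or.inl ⟨rfl, rfl⟩)⟩
  · exact ⟨by simp, Or.inr (Or.inl ⟨by ring, rfl⟩)⟩

lemma adj_vertical {x : ℤ} {m : ℕ} (hm : m + 2 ≤ k) (hx : Even (x + m)) :
    (twistedCylinder k l).Adj (x, (m : ZMod k)) (x, ((m + 1 : ℕ) : ZMod k)) := by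
  refine ⟨?_, Or.inl (Or.inr (Or.inl ?_))⟩
  · rw [Ne, Prod.mk.injEq, ZMod.natCast_eq_natCast_iff', Nat.mod_eq_of_lt (by omega),
      Nat.mod_eq_of_lt (by omega)]
    omega
  · rw [Int.even_iff] at hx
    obtain ⟨n, rfl | rfl⟩ := Int.even_or_odd' x
    · exact ⟨n, m, hm, Or.inl ⟨Nat.even_iff.mpr (by omega), rfl, rfl⟩⟩
    · exact ⟨n, m, hm, Or.inr ⟨Nat.odd_iff.mpr (by omega), rfl, rfl⟩⟩

lemma adj_twist (hk : 2 ≤ k) {x : ℤ} (hx : Odd (x + k)) :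
    (twistedCylinder k l).Adj (x, ((k - 1 : ℕ) : ZMod k)) (x + l, 0) := by
  refine ⟨?_, Or.inl (Or.inr (Or.inr ?_))⟩
  · rw [Ne, Prod.mk.injEq, ← Nat.cast_zero, ZMod.natCast_eq_natCast_iff',
      Nat.mod_eq_of_lt (by omega), Nat.zero_mod]
    omega
  · rw [Int.odd_iff] at hx
    obtain ⟨n, rfl | rfl⟩ := Int.even_or_odd' x
    · exact Or.inr ⟨Nat.odd_iff.mpr (by omega), n, rfl, rfl⟩
    · exact Or.inl ⟨Nat.even_iff.mpr (by omega), n, rfl, rfl⟩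

def rowStart (u c₀ : ℤ) (ε : ℕ → ℤ) (m : ℕ) : ℤ := c₀ + (u - 1) * ∑ r ∈ Finset.range m, ε r

lemma rowStart_zero : rowStart u c₀ ε 0 = c₀ := by simp [rowStart]

lemma rowStart_succ (m : ℕ) : rowStart u c₀ ε (m + 1) = rowStart u c₀ ε m + (u - 1) * ε m := by
  rw [rowStart, rowStart, Finset.sum_range_succ]; ring

lemma odd_rowStart_add (hc₀ : Odd c₀) (hu : Even u) (hε : ∀ r, Odd (ε r)) (m : ℕ) :
    Odd (rowStart u c₀ ε m + m) := by
  induction m with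
  | zero => simpa [rowStart_zero] using hc₀
  | succ m ih =>
    have hstep : Even ((u - 1) * ε m + 1) := ((hu.sub_odd odd_one).mul (hε m)).add_one
    convert ih.add_even hstep using 1
    rw [rowStart_succ]; push_cast; ring

/-- Vertex `(j * k + m) * u + i` (with `m < k` and `0 ≤ i < u`) is the `i`-th of the `u`
vertices visited in row `m` on the `j`-th turn around the cylinder; they start at column
`rowStart u c₀ ε m + j * s` and run in direction `ε m`. -/
def zigzag (k : ℕ) (s u c₀ : ℤ) (ε : ℕ → ℤ) (n : ℤ) : ℤ × ZMod k :=
  (rowStart u c₀ ε (n / u % k).toNat + n / u / k * s + ε (n / u % k).toNat * (n % u),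
    ((n / u % k).toNat : ZMod k))

lemma zigzag_block (hu : 0 < u) {j i : ℤ} {m : ℕ} (hm : m < k) (hi : 0 ≤ i) (hiu : i < u) :
    zigzag k s u c₀ ε ((j * k + m) * u + i) =
      (rowStart u c₀ ε m + j * s + ε m * i, (m : ZMod k)) := by
  obtain ⟨hq, hr⟩ := (Int.ediv_emod_unique (a := (j * k + m) * u + i) (q := j * k + m) hu).2
    ⟨by ring, hi, hiu⟩
  obtain ⟨hj, hm'⟩ := (Int.ediv_emod_unique (a := j * k + m) (b := k) (q := j) (r := m)
    (by omega)).2 ⟨by ring, by omega, by omega⟩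
  simp only [zigzag, hq, hr, hj, hm', Int.toNat_natCast]

lemma exists_eq_block (hk : 0 < k) (hu : 0 < u) (n : ℤ) :
    ∃ (j i : ℤ) (m : ℕ), m < k ∧ 0 ≤ i ∧ i < u ∧ n = (j * k + m) * u + i := by
  have hrow := Int.emod_lt_of_pos (n / u) (by omega : (0 : ℤ) < k)
  refine ⟨n / u / k, n % u, (n / u % k).toNat, by omega, Int.emod_nonneg _ (by omega),
    Int.emod_lt_of_pos _ hu, ?_⟩
  rw [Int.toNat_of_nonneg (Int.emod_nonneg _ (by omega))]
  linear_combination (-1 : ℤ) * Int.emod_add_mul_ediv n u - u * Int.emod_add_mul_ediv (n / u) k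

lemma zigzag_adj (hk : 2 ≤ k) (hs : Even s) (hu : Even u) (hu0 : 0 < u) (hc₀ : Odd c₀)
    (hε : ∀ r, IsUnit (ε r)) (hclose : (u - 1) * ∑ r ∈ Finset.range k, ε r + l = s) (n : ℤ) :
    (twistedCylinder k l).Adj (zigzag k s u c₀ ε n) (zigzag k s u c₀ ε (n + 1)) := by
  have hpar := odd_rowStart_add hc₀ hu fun r => Int.odd_of_isUnit (hε r)
  obtain ⟨j, i, m, hm, hi, hiu, rfl⟩ := exists_eq_block (k := k) (by omega) hu0 n
  rw [zigzag_block hu0 hm hi hiu]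
  by_cases hi1 : i + 1 < u
  · rw [show (j * k + m) * u + i + 1 = (j * k + m) * u + (i + 1) by ring,
      zigzag_block hu0 hm (by omega) hi1, mul_add, mul_one, ← add_assoc]
    exact adj_horizontal (hε m) _ _
  obtain rfl : i = u - 1 := by omega
  rw [show rowStart u c₀ ε m + j * s + ε m * (u - 1) = rowStart u c₀ ε (m + 1) + j * s by
    rw [rowStart_succ]; ring]
  have hodd : Odd (rowStart u c₀ ε (m + 1) + j * s + (m + 1 : ℕ)) := by
    rw [add_right_comm]; exact (hpar (m + 1)).add_even (hs.mul_left j)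
  by_cases hm1 : m + 1 < k
  · rw [show (j * k + m) * u + (u - 1) + 1 = (j * k + (m + 1 : ℕ)) * u + 0 by push_cast; ring,
      zigzag_block hu0 hm1 le_rfl hu0, mul_zero, add_zero]
    refine adj_vertical (by omega) ?_
    rw [show rowStart u c₀ ε (m + 1) + j * s + m
      = rowStart u c₀ ε (m + 1) + j * s + (m + 1 : ℕ) - 1 by push_cast; ring]
    exact hodd.sub_odd odd_one
  · obtain rfl : k = m + 1 := by omega
    rw [show (j * ↑(m + 1) + m) * u + (u - 1) + 1 = ((j + 1) * ↑(m + 1) + (0 : ℕ)) * u + 0 by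
        push_cast; ring, zigzag_block hu0 (by omega) le_rfl hu0, rowStart_zero,
      show c₀ + (j + 1) * s + ε 0 * 0 = rowStart u c₀ ε (m + 1) + j * s + l by
        rw [rowStart]; linear_combination -hclose]
    simpa using adj_twist (l := l) hk hodd

lemma sign_mul_sub_rowStart {m : ℕ} (hε : IsUnit (ε m)) (j i : ℤ) :
    ε m * (rowStart u c₀ ε m + j * s + ε m * i - rowStart u c₀ ε m) = i + s * (ε m * j) := by
  linear_combination i * Int.isUnit_mul_self hε

lemma zigzag_injective (hk : 0 < k) (hu0 : 0 < u) (hus : u ≤ s) (hε : ∀ r, IsUnit (ε r)) :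
    Function.Injective (zigzag k s u c₀ ε) := by
  intro n n' h
  obtain ⟨j, i, m, hm, hi, hiu, rfl⟩ := exists_eq_block (k := k) hk hu0 n
  obtain ⟨j', i', m', hm', hi', hiu', rfl⟩ := exists_eq_block (k := k) hk hu0 n'
  rw [zigzag_block hu0 hm hi hiu, zigzag_block hu0 hm' hi' hiu', Prod.mk.injEq,
    ZMod.natCast_eq_natCast_iff', Nat.mod_eq_of_lt hm, Nat.mod_eq_of_lt hm'] at h
  obtain ⟨hx, rfl⟩ := h
  have hy := congrArg (fun x => ε m * (x - rowStart u c₀ ε m)) hx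
  simp only [sign_mul_sub_rowStart (hε m)] at hy
  obtain ⟨rfl, hj⟩ := Int.eq_and_eq_of_add_mul_eq hi (by omega) hi' (by omega) hy
  rw [mul_right_injective₀ (hε m).ne_zero hj]

lemma mem_range_zigzag (hk : 0 < k) (hu0 : 0 < u) (hus : u ≤ s) (hε : ∀ r, IsUnit (ε r))
    {m : ℕ} (hm : m < k) (x : ℤ) :
    (x, (m : ZMod k)) ∈ Set.range (zigzag k s u c₀ ε) ↔
      ε m * (x - rowStart u c₀ ε m) % s < u := by
  constructor
  · rintro ⟨n, hn⟩
    obtain ⟨j, i, m', hm', hi, hiu, rfl⟩ := exists_eq_block (k := k) hk hu0 n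
    rw [zigzag_block hu0 hm' hi hiu, Prod.mk.injEq, ZMod.natCast_eq_natCast_iff',
      Nat.mod_eq_of_lt hm, Nat.mod_eq_of_lt hm'] at hn
    obtain ⟨rfl, rfl⟩ := hn
    rwa [sign_mul_sub_rowStart (hε _),
      ((Int.ediv_emod_unique (by omega)).2 ⟨rfl, hi, by omega⟩).2]
  · intro hx
    obtain ⟨y, hy⟩ : ∃ y, y = ε m * (x - rowStart u c₀ ε m) := ⟨_, rfl⟩
    rw [← hy] at hx
    refine ⟨(ε m * (y / s) * k + m) * u + y % s, ?_⟩
    rw [zigzag_block hu0 hm (Int.emod_nonneg _ (by omega)) hx, Prod.mk.injEq]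
    refine ⟨?_, rfl⟩
    have hsq := Int.isUnit_mul_self (hε m)
    linear_combination ε m * Int.emod_add_mul_ediv y s + ε m * hy + (x - rowStart u c₀ ε m) * hsq

lemma range_zigzag_eq_compl (hk : 0 < k) (hu0 : 0 < u) (hus : u < s)
    (hε : ∀ r, IsUnit (ε r))
    (hshift : ∀ m < k,
      rowStart (s - u) (c₀ + ε 0 * u) ε m ≡ rowStart u c₀ ε m + ε m * u [ZMOD s]) :
    Set.range (zigzag k s (s - u) (c₀ + ε 0 * u) ε) = (Set.range (zigzag k s u c₀ ε))ᶜ := by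
  have : NeZero k := ⟨by omega⟩
  ext ⟨x, μ⟩
  have hm := ZMod.val_lt μ
  rw [← ZMod.natCast_zmod_val μ, Set.mem_compl_iff, mem_range_zigzag hk hu0 hus.le hε hm,
    mem_range_zigzag hk (by omega) (by omega) hε hm, not_lt, ← Int.emod_sub_lt_sub_iff hu0.le hus]
  have hsq := Int.isUnit_mul_self (hε μ.val)
  have key := ((hshift μ.val hm).sub_left x).mul_left (ε μ.val)
  rw [key, show ε μ.val * (x - (rowStart u c₀ ε μ.val + ε μ.val * u))
    = ε μ.val * (x - rowStart u c₀ ε μ.val) - u by linear_combination (-u) * hsq]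

lemma isDoubleRay_zigzag (hk : 2 ≤ k) (hs : Even s) (hu : Even u) (hu0 : 0 < u) (hus : u ≤ s)
    (hc₀ : Odd c₀) (hε : ∀ r, IsUnit (ε r))
    (hclose : (u - 1) * ∑ r ∈ Finset.range k, ε r + l = s) :
    (twistedCylinder k l).IsDoubleRay (zigzag k s u c₀ ε) :=
  ⟨zigzag_injective (by omega) hu0 hus hε, zigzag_adj hk hs hu hu0 hc₀ hε hclose⟩

theorem hasTwoSpanningDoubleRays_of_shift (hk : 2 ≤ k) (hs : Even s) (hu : Even u) (hu0 : 0 < u)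
    (hus : u < s) (hc₀ : Odd c₀) (hε : ∀ r, IsUnit (ε r))
    (hclose : (u - 1) * ∑ r ∈ Finset.range k, ε r + l = s)
    (hclose' : (s - u - 1) * ∑ r ∈ Finset.range k, ε r + l = s)
    (hshift : ∀ m < k,
      rowStart (s - u) (c₀ + ε 0 * u) ε m ≡ rowStart u c₀ ε m + ε m * u [ZMOD s]) :
    (twistedCylinder k l).HasTwoSpanningDoubleRays :=
  ⟨_, _, isDoubleRay_zigzag hk hs hu hu0 hus.le hc₀ hε hclose,
    isDoubleRay_zigzag hk hs (hs.sub hu) (by omega) (by omega)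
      (hc₀.add_even (hu.mul_left _)) hε hclose',
    range_zigzag_eq_compl (by omega) hu0 hus hε hshift⟩

lemma isDoubleRay_row (μ : ZMod k) : (twistedCylinder k l).IsDoubleRay fun n => (n, μ) :=
  ⟨fun _ _ h => congrArg Prod.fst h, fun n => adj_horizontal isUnit_one n μ⟩

theorem hasTwoSpanningDoubleRays_two : (twistedCylinder 2 l).HasTwoSpanningDoubleRays := by
  refine ⟨_, _, isDoubleRay_row 0, isDoubleRay_row 1, ?_⟩
  have h : ∀ μ : ZMod 2, 1 = μ ↔ ¬0 = μ := by decide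
  ext ⟨x, μ⟩
  simp [Prod.ext_iff, h]

theorem hasTwoSpanningDoubleRays_of_sum_signs (hk : 2 ≤ k) (hu : Even u) (hu0 : 0 < u)
    (hε : ∀ r, IsUnit (ε r)) (hl : (u - 1) * ∑ r ∈ Finset.range k, ε r + l = 2 * u) :
    (twistedCylinder k l).HasTwoSpanningDoubleRays := by
  refine hasTwoSpanningDoubleRays_of_shift (c₀ := 1) hk (even_two_mul u) hu (by omega) (by omega)
    odd_one hε hl (by rwa [show 2 * u - u - 1 = u - 1 by ring]) fun m _ => ?_
  -- with `s = 2 * u` the shift condition reads `2 * u ∣ (ε m - ε 0) * u`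
  obtain ⟨d, hd⟩ := (Int.odd_of_isUnit (hε m)).sub_odd (Int.odd_of_isUnit (hε 0))
  refine Int.modEq_iff_dvd.mpr ⟨d, ?_⟩
  simp only [rowStart]
  linear_combination u * hd

def signPattern (t m : ℕ) : ℤ := if m < t then 1 else (-1) ^ (m - t)

lemma isUnit_signPattern (t m : ℕ) : IsUnit (signPattern t m) := by
  unfold signPattern
  split_ifs
  exacts [isUnit_one, isUnit_neg_one.pow _]

lemma sum_signPattern {t : ℕ} (htk : t ≤ k) (hkt : Even (k - t)) :
    ∑ m ∈ Finset.range k, signPattern t m = t := by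
  obtain ⟨d, rfl⟩ := Nat.exists_eq_add_of_le htk
  rw [Nat.add_sub_cancel_left] at hkt
  have hfirst : ∀ m ∈ Finset.range t, signPattern t m = 1 := fun m hm => by
    simp [signPattern, Finset.mem_range.mp hm]
  rw [Finset.sum_range_add, Finset.sum_congr rfl hfirst]
  simp [signPattern, neg_one_geom_sum, hkt]

theorem hasTwoSpanningDoubleRays_of_signPattern (hk : 2 ≤ k) (t : ℕ) (htk : t ≤ k)
    (hkt : Even (k - t)) (hu : Even u) (hu0 : 0 < u) (hl : (u - 1) * t + l = 2 * u) :
    (twistedCylinder k l).HasTwoSpanningDoubleRays :=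
  hasTwoSpanningDoubleRays_of_sum_signs hk hu hu0 (isUnit_signPattern t)
    (by rwa [sum_signPattern htk hkt])

theorem hasTwoSpanningDoubleRays_of_even_twist (hk : 2 ≤ k) (hke : Even k) (hl : Even l)
    (hl4 : 4 ≤ l) : (twistedCylinder k l).HasTwoSpanningDoubleRays := by
  have hsum : ∑ r ∈ Finset.range k, (-1 : ℤ) ^ r = 0 := by rw [neg_one_geom_sum, if_pos hke]
  refine hasTwoSpanningDoubleRays_of_shift (u := 2) (c₀ := 1) (ε := fun r => (-1) ^ r) hk hl
    even_two two_pos (by omega) odd_one (fun r => isUnit_neg_one.pow r) (by rw [hsum]; ring)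
    (by rw [hsum]; ring) fun m _ => Int.modEq_iff_dvd.mpr ?_
  simp only [rowStart, neg_one_geom_sum]
  rcases Nat.even_or_odd m with hm | hm
  · rw [if_pos hm, hm.neg_one_pow]
    exact ⟨0, by ring⟩
  · rw [if_neg (Nat.not_even_iff_odd.mpr hm), hm.neg_one_pow]
    exact ⟨-1, by ring⟩

end TwistedCylinder

open TwistedCylinder

/-- The twisted cubic cylinder `W̄_{k,l}` contains two vertex-disjoint double rays
whose vertex sets together partition the whole vertex set. -/
theorem cylinder_two_spanning_double_rays (k l : ℕ) (hk : 2 ≤ k) (hkl : Even (k + l)) :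
    ∃ f₁ f₂ : ℤ → ℤ × ZMod k,
      Function.Injective f₁ ∧ Function.Injective f₂ ∧
      (∀ n : ℤ, (twistedCylinder k (l : ℤ)).Adj (f₁ n) (f₁ (n + 1))) ∧
      (∀ n : ℤ, (twistedCylinder k (l : ℤ)).Adj (f₂ n) (f₂ (n + 1))) ∧
      Disjoint (Set.range f₁) (Set.range f₂) ∧
      Set.range f₁ ∪ Set.range f₂ = Set.univ := by
  obtain ⟨f₁, f₂, ⟨hinj₁, hadj₁⟩, ⟨hinj₂, hadj₂⟩, hrange⟩ :
      (twistedCylinder k l).HasTwoSpanningDoubleRays := by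
    have hkl2 := Nat.even_iff.mp hkl
    rcases (by omega : k = 2 ∨ 3 ≤ k) with rfl | hk3
    · exact hasTwoSpanningDoubleRays_two
    by_cases hl4 : l ≤ 4
    · exact hasTwoSpanningDoubleRays_of_signPattern (u := 2) hk (4 - l) (by omega)
        (Nat.even_iff.mpr (by omega)) even_two two_pos (by omega)
    rcases Nat.even_or_odd k with hke | hko
    · exact hasTwoSpanningDoubleRays_of_even_twist hk hke
        (by exact_mod_cast (Nat.even_add.mp hkl).mp hke) (by omega)
    · have hlo := Nat.odd_iff.mp hko
      exact hasTwoSpanningDoubleRays_of_signPattern (u := l - 1) hk 1 (by omega)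
        (Nat.even_iff.mpr (by omega)) (Int.even_iff.mpr (by omega)) (by omega) (by push_cast; ring)
  exact ⟨f₁, f₂, hinj₁, hinj₂, hadj₁, hadj₂, hrange ▸ disjoint_compl_right,
    hrange ▸ Set.union_compl_self _⟩
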